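/- Let U ⊂ ℝ^d be a bounded nonempty open set and α ∈ [0,1]. Suppose ∂U is (d-1+α)-summable, i.e. Σ_{k=0}^∞ N_{∂U}(k) 2^{-k(d-1+α)} < ∞, where N_{∂U}(k) is the number of dyadic cubes of side 2^{-k} meeting ∂U. Then for every k, the number of Whitney cubes of generation k of U is at most 3^d · 2^d · N_{∂U}(k-1); consequently Σ_k (Card 𝒬_k) 2^{-k(d-1+α)} < ∞, where 𝒬_k denotes the Whitney cubes of generation k. -/

import Mathlib

open MeasureTheory Filter

/-- The closed dyadic `k`-cube of `ℝ^d` indexed by `ℓ : Fin d → ℤ`. -/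
def dyCube (d : ℕ) (k : ℕ) (ℓ : Fin d → ℤ) : Set (EuclideanSpace ℝ (Fin d)) :=
  {x | ∀ i, (ℓ i : ℝ) / 2 ^ k ≤ x i ∧ x i ≤ ((ℓ i : ℝ) + 1) / 2 ^ k}

/-- Whitney cubes of generation `k` of an open set `U`: dyadic `k`-cubes `Q` such that `Q`
and all of its `3^d - 1` neighbors are contained in `U`, and `Q` is not contained in a
Whitney cube of an earlier generation. -/
def whitney (d : ℕ) (U : Set (EuclideanSpace ℝ (Fin d))) (k : ℕ) : Set (Fin d → ℤ) :=
  Nat.strongRecOn k (fun k ih =>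
    {ℓ | (∀ ℓ' : Fin d → ℤ, (∀ i, |ℓ' i - ℓ i| ≤ 1) → dyCube d k ℓ' ⊆ U) ∧
      ∀ j, ∀ hj : j < k, ∀ ℓ'' ∈ ih j hj, ¬ dyCube d k ℓ ⊆ dyCube d j ℓ''})

/-- `boxCount d A k` is `N_A(k)`, the number of dyadic `k`-cubes meeting `A`. -/
noncomputable def boxCount (d : ℕ) (A : Set (EuclideanSpace ℝ (Fin d))) (k : ℕ) : ℕ∞ :=
  Set.encard {ℓ : Fin d → ℤ | (dyCube d k ℓ ∩ A).Nonempty}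

/-!
Let `Q` be a Whitney cube of generation `k + 1` and `P` its parent `k`-cube. The children of `P`
are neighbours of `Q`, so `P ⊆ U`. If every neighbour of `P` lay in `U`, then `P`, or a Whitney
cube of earlier generation containing `P`, would be a Whitney cube of generation `≤ k` containing
`Q`. So some neighbour `M` of `P` leaves `U`; as `M` meets `P ⊆ U` and is connected, `M` meets
`∂U`. Hence `Q` is one of the `2^d` children of one of the `3^d` neighbours of a `k`-cube meeting
`∂U`. The weights `2^{-k(d-1+α)}` drop by a fixed factor from `k` to `k + 1`, so the weighted sum
over Whitney cubes is bounded by a multiple of the one over boundary cubes, plus the finitely many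
cubes of generation `0`.
-/

open scoped ENNReal

theorem IsPreconnected.inter_frontier_nonempty {X : Type*} [TopologicalSpace X] {s u : Set X}
    (hs : IsPreconnected s) (hu : IsOpen u) (hsu : (s ∩ u).Nonempty) (hsu' : ¬s ⊆ u) :
    (s ∩ frontier u).Nonempty := by
  by_contra h
  refine hsu' (hs.subset_of_closure_inter_subset hu hsu fun x ⟨hxc, hxs⟩ => ?_)
  by_contra hxu
  exact h ⟨x, hxs, hxc, by rwa [hu.interior_eq]⟩

theorem ENNReal.tsum_ne_top_of_succ_le {f g : ℕ → ℝ≥0∞} {C : ℝ≥0∞} (hC : C ≠ ∞)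
    (h0 : f 0 ≠ ∞) (hfg : ∀ k, f (k + 1) ≤ C * g k) (hg : ∑' k, g k ≠ ∞) :
    ∑' k, f k ≠ ∞ := by
  rw [tsum_eq_zero_add' ENNReal.summable]
  refine ENNReal.add_ne_top.2 ⟨h0, ne_top_of_le_ne_top (ENNReal.mul_ne_top hC hg) ?_⟩
  rw [← ENNReal.tsum_mul_left]
  exact ENNReal.tsum_le_tsum hfg

theorem ENNReal.ofReal_two_rpow_neg_succ_mul (s : ℝ) (k : ℕ) :
    ENNReal.ofReal (2 ^ (-((k + 1 : ℕ) : ℝ) * s)) =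
      ENNReal.ofReal (2 ^ (-s)) * ENNReal.ofReal (2 ^ (-(k : ℝ) * s)) := by
  rw [← ENNReal.ofReal_mul (by positivity), ← Real.rpow_add two_pos]
  push_cast
  ring_nf

theorem mem_whitney_iff {d : ℕ} {U : Set (EuclideanSpace ℝ (Fin d))} {k : ℕ} {ℓ : Fin d → ℤ} :
    ℓ ∈ whitney d U k ↔
      (∀ ℓ' : Fin d → ℤ, (∀ i, |ℓ' i - ℓ i| ≤ 1) → dyCube d k ℓ' ⊆ U) ∧
        ∀ j < k, ∀ ℓ'' ∈ whitney d U j, ¬dyCube d k ℓ ⊆ dyCube d j ℓ'' := by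
  rw [whitney, Nat.strongRecOn_eq]
  rfl

section DyadicCube

variable {d k : ℕ}

theorem mem_dyCube_iff {ℓ : Fin d → ℤ} {x : EuclideanSpace ℝ (Fin d)} :
    x ∈ dyCube d k ℓ ↔ ∀ i, (ℓ i : ℝ) ≤ 2 ^ k * x i ∧ 2 ^ k * x i ≤ ℓ i + 1 := by
  have h : (0 : ℝ) < 2 ^ k := by positivity
  simp only [dyCube, Set.mem_ofPred_eq, div_le_iff₀ h, le_div_iff₀ h, mul_comm (2 ^ k : ℝ)]

theorem toLp_div_two_pow_mem_dyCube_iff {ℓ m : Fin d → ℤ} :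
    WithLp.toLp 2 (fun i => (m i : ℝ) / 2 ^ k) ∈ dyCube d k ℓ ↔ ∀ i, ℓ i ≤ m i ∧ m i ≤ ℓ i + 1 := by
  simp only [mem_dyCube_iff, mul_div_cancel₀ _ (pow_ne_zero k (two_ne_zero' ℝ))]
  norm_cast

theorem convex_dyCube (ℓ : Fin d → ℤ) : Convex ℝ (dyCube d k ℓ) := by
  simp only [dyCube, Set.ofPred_forall, Set.ofPred_and]
  exact convex_iInter fun i =>
    (convex_halfSpace_ge (EuclideanSpace.proj i).toLinearMap.isLinear _).inter
      (convex_halfSpace_le (EuclideanSpace.proj i).toLinearMap.isLinear _)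

theorem dyCube_inter_dyCube_nonempty {a b : Fin d → ℤ} (h : ∀ i, |a i - b i| ≤ 1) :
    (dyCube d k a ∩ dyCube d k b).Nonempty := by
  refine ⟨_, toLp_div_two_pow_mem_dyCube_iff (m := fun i => max (a i) (b i)) |>.2 fun i => ?_,
    toLp_div_two_pow_mem_dyCube_iff.2 fun i => ?_⟩ <;>
  · have := abs_le.1 (h i)
    omega

theorem dyCube_succ_subset_dyCube_div_two (ℓ : Fin d → ℤ) :
    dyCube d (k + 1) ℓ ⊆ dyCube d k (fun i => ℓ i / 2) := by
  intro x hx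
  rw [mem_dyCube_iff] at hx ⊢
  intro i
  have hℓ : ((ℓ i / 2 : ℤ) : ℝ) * 2 ≤ ℓ i ∧ (ℓ i : ℝ) + 1 ≤ ((ℓ i / 2 : ℤ) + 1) * 2 := by
    constructor <;> norm_cast <;> omega
  have hx := hx i
  rw [pow_succ] at hx
  constructor <;> linarith

theorem exists_mem_dyCube_succ_of_mem_dyCube {p : Fin d → ℤ} {x : EuclideanSpace ℝ (Fin d)}
    (hx : x ∈ dyCube d k p) : ∃ s : Fin d → ℤ, (∀ i, s i / 2 = p i) ∧ x ∈ dyCube d (k + 1) s := by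
  classical
  rw [mem_dyCube_iff] at hx
  refine ⟨fun i => if 2 ^ (k + 1) * x i ≤ 2 * p i + 1 then 2 * p i else 2 * p i + 1,
    fun i => by dsimp only; split_ifs <;> omega, mem_dyCube_iff.2 fun i => ?_⟩
  have hx := hx i
  rw [pow_succ]
  split_ifs with h
  · push_cast; constructor <;> linarith
  · push_cast; constructor <;> linarith [not_le.1 h]

end DyadicCube

section Whitney

variable {d k : ℕ} {U : Set (EuclideanSpace ℝ (Fin d))} {ℓ : Fin d → ℤ}

theorem dyCube_div_two_subset_of_mem_whitney_succ (h : ℓ ∈ whitney d U (k + 1)) :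
    dyCube d k (fun i => ℓ i / 2) ⊆ U := by
  intro x hx
  obtain ⟨s, hs, hxs⟩ := exists_mem_dyCube_succ_of_mem_dyCube hx
  refine (mem_whitney_iff.1 h).1 s (fun i => abs_le.2 ?_) hxs
  have := hs i
  omega

theorem exists_neighbor_not_subset_of_mem_whitney_succ (h : ℓ ∈ whitney d U (k + 1)) :
    ∃ m : Fin d → ℤ, (∀ i, |m i - ℓ i / 2| ≤ 1) ∧ ¬dyCube d k m ⊆ U := by
  obtain ⟨-, hmin⟩ := mem_whitney_iff.1 h
  have hparent := dyCube_succ_subset_dyCube_div_two (k := k) ℓ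
  by_contra! hall
  by_cases hearlier :
      ∃ j < k, ∃ ℓ'' ∈ whitney d U j, dyCube d k (fun i => ℓ i / 2) ⊆ dyCube d j ℓ''
  · obtain ⟨j, hj, ℓ'', hℓ'', hsub⟩ := hearlier
    exact hmin j (by omega) ℓ'' hℓ'' (hparent.trans hsub)
  · push Not at hearlier
    exact hmin k k.lt_succ_self _ (mem_whitney_iff.2 ⟨hall, hearlier⟩) hparent

theorem exists_dyCube_inter_frontier_nonempty_of_mem_whitney_succ (hU : IsOpen U)
    (h : ℓ ∈ whitney d U (k + 1)) :
    ∃ m : Fin d → ℤ, (dyCube d k m ∩ frontier U).Nonempty ∧ ∀ i, |m i - ℓ i / 2| ≤ 1 := by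
  obtain ⟨m, hm, hmU⟩ := exists_neighbor_not_subset_of_mem_whitney_succ h
  obtain ⟨y, hym, hy⟩ := dyCube_inter_dyCube_nonempty (k := k) hm
  exact ⟨m, (convex_dyCube m).isPreconnected.inter_frontier_nonempty hU
    ⟨y, hym, dyCube_div_two_subset_of_mem_whitney_succ h hy⟩ hmU, hm⟩

theorem encard_whitney_succ_le (hU : IsOpen U) (k : ℕ) :
    (whitney d U (k + 1)).encard ≤ 3 ^ d * 2 ^ d * boxCount d (frontier U) k := by
  set B := {m : Fin d → ℤ | (dyCube d k m ∩ frontier U).Nonempty}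
  -- `f (m, e, c)` is the child `c` of the neighbour `m + e - 1` of `m`
  let f : (Fin d → ℤ) × (Fin d → Fin 3) × (Fin d → Fin 2) → Fin d → ℤ :=
    fun x i => 2 * (x.1 i + x.2.1 i - 1) + x.2.2 i
  have hsub : whitney d U (k + 1) ⊆ f '' (B ×ˢ Set.univ) := by
    intro ℓ hℓ
    obtain ⟨m, hmB, hm⟩ := exists_dyCube_inter_frontier_nonempty_of_mem_whitney_succ hU hℓ
    replace hm i := abs_le.1 (hm i)
    refine ⟨(m, fun i => ⟨(ℓ i / 2 - m i + 1).toNat, by have := hm i; omega⟩,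
      fun i => ⟨(ℓ i % 2).toNat, by omega⟩), ⟨hmB, trivial⟩, funext fun i => ?_⟩
    have := hm i
    simp only [f]
    omega
  calc (whitney d U (k + 1)).encard ≤ (B ×ˢ Set.univ).encard :=
        (Set.encard_le_encard hsub).trans (Set.encard_image_le _ _)
    _ = 3 ^ d * 2 ^ d * boxCount d (frontier U) k := by
      rw [Set.encard_prod, Set.encard_univ, ENat.card_eq_coe_fintype_card, mul_comm]
      simp [Fintype.card_prod, boxCount, B]

theorem finite_whitney_zero (hU : Bornology.IsBounded U) : (whitney d U 0).Finite := by
  obtain ⟨C, hC⟩ := isBounded_iff_forall_norm_le.1 hU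
  suffices Bornology.IsBounded (whitney d U 0) from
    this.isCompact_closure.finite_of_discrete.subset subset_closure
  refine isBounded_iff_forall_norm_le.2 ⟨C, fun ℓ hℓ => ?_⟩
  set x : EuclideanSpace ℝ (Fin d) := WithLp.toLp 2 fun i => (ℓ i : ℝ) / 2 ^ 0
  have hx : ‖x‖ ≤ C := hC x <| (mem_whitney_iff.1 hℓ).1 ℓ (by simp)
    (toLp_div_two_pow_mem_dyCube_iff.2 fun i => by omega)
  refine (pi_norm_le_iff_of_nonneg ((norm_nonneg x).trans hx)).2 fun i => ?_
  rw [← Int.norm_cast_real]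
  simpa [x] using (PiLp.norm_apply_le x i).trans hx

end Whitney

theorem stmt4_general (d : ℕ) (α : ℝ)
    (U : Set (EuclideanSpace ℝ (Fin d))) (hUo : IsOpen U)
    (hUb : Bornology.IsBounded U)
    (hsum : ∑' k : ℕ, (boxCount d (frontier U) k : ENNReal) *
        ENNReal.ofReal ((2 : ℝ) ^ (-(k : ℝ) * ((d : ℝ) - 1 + α))) < ⊤) :
    (∀ k : ℕ, 1 ≤ k →
        Set.encard (whitney d U k) ≤ 3 ^ d * 2 ^ d * boxCount d (frontier U) (k - 1)) ∧
    ∑' k : ℕ, ((whitney d U k).encard : ENNReal) *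
        ENNReal.ofReal ((2 : ℝ) ^ (-(k : ℝ) * ((d : ℝ) - 1 + α))) < ⊤ := by
  refine ⟨fun k hk => ?_, lt_top_iff_ne_top.2 ?_⟩
  · obtain ⟨k, rfl⟩ := Nat.exists_eq_add_of_le' hk
    exact encard_whitney_succ_le hUo k
  refine ENNReal.tsum_ne_top_of_succ_le
    (C := 3 ^ d * 2 ^ d * ENNReal.ofReal (2 ^ (-((d : ℝ) - 1 + α)))) (by finiteness)
    (ENNReal.mul_ne_top (by exact_mod_cast (finite_whitney_zero hUb).encard_lt_top.ne)
      ENNReal.ofReal_ne_top) (fun k => ?_) hsum.ne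
  rw [ENNReal.ofReal_two_rpow_neg_succ_mul]
  calc _ ≤ 3 ^ d * 2 ^ d * (boxCount d (frontier U) k : ℝ≥0∞) *
        (ENNReal.ofReal (2 ^ (-((d : ℝ) - 1 + α))) *
          ENNReal.ofReal (2 ^ (-(k : ℝ) * ((d : ℝ) - 1 + α)))) := by
          gcongr
          exact_mod_cast encard_whitney_succ_le hUo k
    _ = _ := by ring

theorem stmt4 (d : ℕ) (hd : 1 ≤ d) (α : ℝ) (hα : α ∈ Set.Icc (0 : ℝ) 1)
    (U : Set (EuclideanSpace ℝ (Fin d))) (hUo : IsOpen U)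
    (hUb : Bornology.IsBounded U) (hUne : U.Nonempty)
    (hsum : ∑' k : ℕ, (boxCount d (frontier U) k : ENNReal) *
        ENNReal.ofReal ((2 : ℝ) ^ (-(k : ℝ) * ((d : ℝ) - 1 + α))) < ⊤) :
    (∀ k : ℕ, 1 ≤ k →
        Set.encard (whitney d U k) ≤ 3 ^ d * 2 ^ d * boxCount d (frontier U) (k - 1)) ∧
    ∑' k : ℕ, ((whitney d U k).encard : ENNReal) *
        ENNReal.ofReal ((2 : ℝ) ^ (-(k : ℝ) * ((d : ℝ) - 1 + α))) < ⊤ :=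
  stmt4_general d α U hUo hUb hsum
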